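/- arXiv:math/0508297 — 6 statements merged into one kernel-verified Lean document; each statement's English description precedes it below -/
import Mathlib

section
/- For all real numbers a, b in [0,1], one has (3/2 - √2)·(√a - √b)² ≤ (√((a+b)/2) - √b)². -/
/-!
Write `x = √a`, `y = √b`, `s = √((a + b) / 2)`. Since `s² - y² = (x² - y²) / 2`, the inequality
becomes `(2 - √2) (s + y) ≤ x + y` after cancelling `(s + y)²` (note `(2 - √2)² / 4 = 3/2 - √2`),
and this follows from `s ≤ (x + y) / √2`.
-/

open Real

lemma sqrt_half_add_le {a b : ℝ} (ha : 0 ≤ a) (hb : 0 ≤ b) :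
    √((a + b) / 2) ≤ (√a + √b) / √2 := by
  rw [le_div_iff₀ (by positivity), ← sqrt_mul (by positivity), div_mul_cancel₀ _ two_ne_zero,
    sqrt_le_iff]
  refine ⟨by positivity, ?_⟩
  nlinarith [sq_sqrt ha, sq_sqrt hb, mul_nonneg (sqrt_nonneg a) (sqrt_nonneg b)]

lemma two_sub_sqrt_two_mul_le {a b : ℝ} (ha : 0 ≤ a) (hb : 0 ≤ b) :
    (2 - √2) * (√((a + b) / 2) + √b) ≤ √a + √b := by
  have hr : √2 ^ 2 = 2 := sq_sqrt (by norm_num)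
  have hr1 : 1 ≤ √2 := by nlinarith [sqrt_nonneg 2]
  have hr2 : √2 ≤ 2 := by nlinarith
  have hs := sqrt_half_add_le ha hb
  rw [le_div_iff₀ (by positivity)] at hs
  -- `(2 - √2) s ≤ (√2 - 1)(x + y)` and `(2 - √2) y ≤ (2 - √2)(x + y)` add up to the claim.
  nlinarith [mul_le_mul_of_nonneg_left hs (sub_nonneg.2 hr1), sqrt_nonneg a, sqrt_nonneg b,
    mul_nonneg (sub_nonneg.2 hr2) (sqrt_nonneg a)]

lemma sqrt_half_add_sub_sqrt_mul_add {a b : ℝ} (ha : 0 ≤ a) (hb : 0 ≤ b) :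
    (√((a + b) / 2) - √b) * (√((a + b) / 2) + √b) = (√a - √b) * (√a + √b) / 2 := by
  have hs := sq_sqrt (show 0 ≤ (a + b) / 2 by positivity)
  nlinarith [sq_sqrt ha, sq_sqrt hb]

lemma mul_sq_sqrt_sub_le_sq_sqrt_half_add_sub {a b c : ℝ} (ha : 0 ≤ a) (hb : 0 ≤ b) (hc : 0 ≤ c)
    (h : c * (√((a + b) / 2) + √b) ≤ √a + √b) :
    c ^ 2 / 4 * (√a - √b) ^ 2 ≤ (√((a + b) / 2) - √b) ^ 2 := by
  set s := √((a + b) / 2)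
  rcases (add_nonneg (sqrt_nonneg _) (sqrt_nonneg b) : 0 ≤ s + √b).eq_or_lt with h0 | hpos
  · have hs : s = 0 := by linarith [sqrt_nonneg ((a + b) / 2), sqrt_nonneg b]
    have hb0 : b = 0 := by rw [← sqrt_eq_zero hb]; linarith [sqrt_nonneg b]
    have ha0 : a = 0 := by
      rw [sqrt_eq_zero (by positivity), hb0] at hs; linarith
    simp [ha0, hb0, hs]
  · have key := sqrt_half_add_sub_sqrt_mul_add ha hb
    have hcs := mul_le_mul h h (by positivity) (by positivity)
    refine le_of_mul_le_mul_right ?_ (pow_pos hpos 2)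
    calc c ^ 2 / 4 * (√a - √b) ^ 2 * (s + √b) ^ 2
        = (√a - √b) ^ 2 * ((c * (s + √b)) * (c * (s + √b))) / 4 := by ring
      _ ≤ (√a - √b) ^ 2 * ((√a + √b) * (√a + √b)) / 4 := by gcongr
      _ = (s - √b) ^ 2 * (s + √b) ^ 2 := by
        rw [← mul_pow, key]; ring

theorem stmt_0 (a b : ℝ) (ha : a ∈ Set.Icc (0:ℝ) 1) (hb : b ∈ Set.Icc (0:ℝ) 1) :
    (3/2 - Real.sqrt 2) * (Real.sqrt a - Real.sqrt b)^2 ≤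
      (Real.sqrt ((a + b)/2) - Real.sqrt b)^2 := by
  have hc : (3 / 2 - √2) = (2 - √2) ^ 2 / 4 := by
    nlinarith [sq_sqrt (show (0 : ℝ) ≤ 2 by norm_num)]
  have hr : √2 ≤ 2 := by
    rw [sqrt_le_left (by norm_num)]; norm_num
  rw [hc]
  exact mul_sq_sqrt_sub_le_sq_sqrt_half_add_sub ha.1 hb.1 (by linarith)
    (two_sub_sqrt_two_mul_le ha.1 hb.1)
end

section
/- The function φ(t) = (3/2 - √2)·(√t - 1)² - (√((t+1)/2) - 1)² satisfies φ(t) ≤ 0 for all t ≥ 0, with equality at t = 1. -/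
theorem stmt_1 (φ : ℝ → ℝ)
    (hφ : ∀ t, φ t = (3/2 - Real.sqrt 2) * (Real.sqrt t - 1)^2
        - (Real.sqrt ((t + 1)/2) - 1)^2) :
    (∀ t : ℝ, 0 ≤ t → φ t ≤ 0) ∧ φ 1 = 0 := by
  constructor
  · intro t ht
    rw [hφ]
    set s := Real.sqrt t with hsdef
    set u := Real.sqrt ((t + 1)/2) with hudef
    have hs : 0 ≤ s := Real.sqrt_nonneg _
    have hu : 0 ≤ u := Real.sqrt_nonneg _
    have hs2 : s ^ 2 = t := Real.sq_sqrt ht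
    have hu2 : u ^ 2 = (t + 1) / 2 := Real.sq_sqrt (by linarith)
    have h2 : Real.sqrt 2 ^ 2 = 2 := Real.sq_sqrt (by norm_num)
    have h2n : 0 ≤ Real.sqrt 2 := Real.sqrt_nonneg 2
    have h2ge : (1 : ℝ) ≤ Real.sqrt 2 := by nlinarith
    have h2le : Real.sqrt 2 ≤ 3/2 := by nlinarith
    -- key inequality: (2 - √2) * (u + 1) ≤ s + 1
    have key : (2 - Real.sqrt 2) * (u + 1) ≤ s + 1 := by
      nlinarith [mul_nonneg hs (mul_nonneg hs hu), mul_nonneg hs hu,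
        mul_nonneg (mul_nonneg hs hs) hs, sq_nonneg (s - u), sq_nonneg (s + 1)]
    have key2 : ((2 - Real.sqrt 2) * (u + 1)) ^ 2 ≤ (s + 1) ^ 2 := by
      have h0 : 0 ≤ (2 - Real.sqrt 2) * (u + 1) := by nlinarith
      nlinarith
    have hfac : 2 * (u + 1) * (u - 1) = (s - 1) * (s + 1) := by nlinarith
    have hup : (0:ℝ) < u + 1 := by linarith
    have hfacsq : (2 * (u + 1) * (u - 1)) ^ 2 = ((s - 1) * (s + 1)) ^ 2 := by rw [hfac]
    have h2' : (Real.sqrt 2 ^ 2 - 2) * ((u + 1) * (s - 1)) ^ 2 = 0 := by rw [h2]; ring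
    have hA : (6 - 4 * Real.sqrt 2) * ((u + 1) ^ 2 * (s - 1) ^ 2)
        ≤ 4 * ((u + 1) ^ 2 * (u - 1) ^ 2) := by
      linarith [mul_le_mul_of_nonneg_left key2 (sq_nonneg (s - 1)), hfacsq, h2']
    have hA' : (u + 1) ^ 2 * ((6 - 4 * Real.sqrt 2) * (s - 1) ^ 2)
        ≤ (u + 1) ^ 2 * (4 * (u - 1) ^ 2) := by linarith [hA]
    have hB := le_of_mul_le_mul_left hA' (pow_pos hup 2)
    linarith [hB]
  · rw [hφ]
    norm_num
end

section
/- Suppose for every j that β'_{jl} = 0 ↔ β''_{jl} = 0 for all l (equivalence of the one-dimensional marginals), where β', β'' are arrays of probability vectors. Then ∏_j ∑_l √(β'_{jl}·β''_{jl}) = 0 if and only if ∑_j ∑_l (√(β'_{jl}) - √(β''_{jl}))² = ∞. -/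
open Filter Finset

lemma weier (s : Finset ℕ) (b : ℕ → ℝ) (hb : ∀ i ∈ s, 0 ≤ b i) (hb1 : ∀ i ∈ s, b i ≤ 1) :
    1 - ∑ i ∈ s, b i ≤ ∏ i ∈ s, (1 - b i) := by
  induction s using Finset.induction_on with
  | empty => simp
  | insert _ _ hx ih =>
    rename_i x s
    rw [Finset.sum_insert hx, Finset.prod_insert hx]
    have h1 := ih (fun i hi => hb i (Finset.mem_insert_of_mem hi))
      (fun i hi => hb1 i (Finset.mem_insert_of_mem hi))
    have hbx0 : 0 ≤ b x := hb x (Finset.mem_insert_self x s)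
    have hbx1 : b x ≤ 1 := hb1 x (Finset.mem_insert_self x s)
    have hS : 0 ≤ ∑ i ∈ s, b i := Finset.sum_nonneg (fun i hi => hb i (Finset.mem_insert_of_mem hi))
    nlinarith [mul_le_mul_of_nonneg_left h1 (by linarith : (0:ℝ) ≤ 1 - b x)]

lemma key (a : ℕ → ℝ) (h0 : ∀ j, 0 < a j) (h1 : ∀ j, a j ≤ 1) :
    Tendsto (fun n => ∏ j ∈ range n, a j) atTop (nhds 0) ↔
      ¬ Summable (fun j => 1 - a j) := by
  constructor
  · intro htend hsumm
    have hs := hsumm.hasSum.tendsto_sum_nat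
    have hc : CauchySeq (fun n => ∑ j ∈ range n, (1 - a j)) := hs.cauchySeq
    obtain ⟨N, hN⟩ := (Metric.cauchySeq_iff'.1 hc) (1/2) (by norm_num)
    have hpN : 0 < ∏ j ∈ range N, a j := Finset.prod_pos (fun j _ => h0 j)
    have hlow : ∀ n, N ≤ n → (∏ j ∈ range N, a j) / 2 ≤ ∏ j ∈ range n, a j := by
      intro n hn
      have hico : ∑ j ∈ Finset.Ico N n, (1 - a j) ≤ 1/2 := by
        have := hN n hn
        rw [Real.dist_eq] at this
        have hsub : ∑ j ∈ Finset.Ico N n, (1 - a j)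
            = ∑ j ∈ range n, (1 - a j) - ∑ j ∈ range N, (1 - a j) := by
          rw [Finset.sum_Ico_eq_sub _ hn]
        rw [hsub]
        have := abs_lt.1 this
        linarith [this.2]
      have hw := weier (Finset.Ico N n) (fun j => 1 - a j)
        (fun i _ => by linarith [h1 i]) (fun i _ => by linarith [h0 i])
      have hwp : ∏ i ∈ Finset.Ico N n, (1 - (1 - a i)) = ∏ i ∈ Finset.Ico N n, a i :=
        Finset.prod_congr rfl (fun i _ => by ring)
      rw [hwp] at hw
      have hsplit : (∏ j ∈ range N, a j) * ∏ j ∈ Finset.Ico N n, a j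
          = ∏ j ∈ range n, a j := Finset.prod_range_mul_prod_Ico a hn
      have h2 : (1:ℝ)/2 ≤ ∏ i ∈ Finset.Ico N n, a i := by linarith
      calc (∏ j ∈ range N, a j) / 2 = (∏ j ∈ range N, a j) * (1/2) := by ring
        _ ≤ (∏ j ∈ range N, a j) * ∏ i ∈ Finset.Ico N n, a i :=
            mul_le_mul_of_nonneg_left h2 hpN.le
        _ = ∏ j ∈ range n, a j := hsplit
    have hev : ∀ᶠ n in atTop, ∏ j ∈ range n, a j < (∏ j ∈ range N, a j) / 2 :=
      htend.eventually (gt_mem_nhds (by positivity))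
    obtain ⟨n, hn1, hn2⟩ := (hev.and (eventually_ge_atTop N)).exists
    exact absurd (hlow n hn2) (not_le.2 hn1)
  · intro hns
    have hT : Tendsto (fun n => ∑ j ∈ range n, (1 - a j)) atTop atTop :=
      (not_summable_iff_tendsto_nat_atTop_of_nonneg (fun j => by linarith [h1 j])).1 hns
    have hub : ∀ n, ∏ j ∈ range n, a j ≤ Real.exp (-(∑ j ∈ range n, (1 - a j))) := by
      intro n
      calc ∏ j ∈ range n, a j ≤ ∏ j ∈ range n, Real.exp (a j - 1) :=
            Finset.prod_le_prod (fun j _ => (h0 j).le)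
              (fun j _ => by linarith [Real.add_one_le_exp (a j - 1)])
        _ = Real.exp (∑ j ∈ range n, (a j - 1)) := (Real.exp_sum _ _).symm
        _ = Real.exp (-(∑ j ∈ range n, (1 - a j))) := by
            congr 1
            rw [← Finset.sum_neg_distrib]
            exact Finset.sum_congr rfl (fun j _ => by ring)
    have hexp : Tendsto (fun n => Real.exp (-(∑ j ∈ range n, (1 - a j)))) atTop (nhds 0) :=
      Real.tendsto_exp_atBot.comp (tendsto_neg_atTop_atBot.comp hT)
    exact tendsto_of_tendsto_of_tendsto_of_le_of_le tendsto_const_nhds hexp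
      (fun n => Finset.prod_nonneg (fun j _ => (h0 j).le)) hub

open Filter Finset

theorem stmt_5 (L : ℕ → ℕ) (hL : ∀ j, 0 < L j)
    (β' β'' : ℕ → ℕ → ℝ)
    (hβ' : ∀ j l, l < L j → 0 ≤ β' j l)
    (hβ'' : ∀ j l, l < L j → 0 ≤ β'' j l)
    (hsum' : ∀ j, ∑ l ∈ range (L j), β' j l = 1)
    (hsum'' : ∀ j, ∑ l ∈ range (L j), β'' j l = 1)
    (hequiv : ∀ j l, l < L j → (β' j l = 0 ↔ β'' j l = 0)) :
    Tendsto (fun n => ∏ j ∈ range n, ∑ l ∈ range (L j),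
        Real.sqrt (β' j l * β'' j l)) atTop (nhds 0) ↔
      Tendsto (fun n => ∑ j ∈ range n, ∑ l ∈ range (L j),
        (Real.sqrt (β' j l) - Real.sqrt (β'' j l))^2) atTop atTop := by
  set a : ℕ → ℝ := fun j => ∑ l ∈ range (L j), Real.sqrt (β' j l * β'' j l) with ha
  have ha0 : ∀ j, 0 < a j := by
    intro j
    obtain ⟨l, hl, hne⟩ : ∃ l ∈ range (L j), β' j l ≠ 0 := by
      by_contra h
      push_neg at h
      have : ∑ l ∈ range (L j), β' j l = 0 := Finset.sum_eq_zero h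
      rw [hsum' j] at this; norm_num at this
    have hlL : l < L j := mem_range.1 hl
    have hb1 : 0 < β' j l := lt_of_le_of_ne (hβ' j l hlL) (Ne.symm hne)
    have hb2 : 0 < β'' j l := lt_of_le_of_ne (hβ'' j l hlL)
      (fun h => hne ((hequiv j l hlL).2 h.symm))
    have hterm : 0 < Real.sqrt (β' j l * β'' j l) := Real.sqrt_pos.2 (mul_pos hb1 hb2)
    have hle : Real.sqrt (β' j l * β'' j l) ≤ a j :=
      Finset.single_le_sum (f := fun i => Real.sqrt (β' j i * β'' j i))
        (fun i _ => Real.sqrt_nonneg _) hl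
    linarith
  have ha1 : ∀ j, a j ≤ 1 := by
    intro j
    have h1 : a j = ∑ l ∈ range (L j), Real.sqrt (β' j l) * Real.sqrt (β'' j l) :=
      Finset.sum_congr rfl (fun l hl => Real.sqrt_mul (hβ' j l (mem_range.1 hl)) _)
    have h2 := Real.sum_mul_le_sqrt_mul_sqrt (range (L j))
      (fun l => Real.sqrt (β' j l)) (fun l => Real.sqrt (β'' j l))
    have e1 : ∑ l ∈ range (L j), Real.sqrt (β' j l) ^ 2 = 1 := by
      rw [← hsum' j]
      exact Finset.sum_congr rfl (fun l hl => Real.sq_sqrt (hβ' j l (mem_range.1 hl)))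
    have e2 : ∑ l ∈ range (L j), Real.sqrt (β'' j l) ^ 2 = 1 := by
      rw [← hsum'' j]
      exact Finset.sum_congr rfl (fun l hl => Real.sq_sqrt (hβ'' j l (mem_range.1 hl)))
    rw [e1, e2, Real.sqrt_one, mul_one] at h2
    rw [h1]; exact h2
  have hb : ∀ j, ∑ l ∈ range (L j), (Real.sqrt (β' j l) - Real.sqrt (β'' j l))^2
      = 2 - 2 * a j := by
    intro j
    have hpt : ∀ l ∈ range (L j), (Real.sqrt (β' j l) - Real.sqrt (β'' j l))^2
        = β' j l + β'' j l - 2 * Real.sqrt (β' j l * β'' j l) := by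
      intro l hl
      have hlL := mem_range.1 hl
      rw [sub_sq, Real.sq_sqrt (hβ' j l hlL), Real.sq_sqrt (hβ'' j l hlL),
        Real.sqrt_mul (hβ' j l hlL)]
      ring
    rw [Finset.sum_congr rfl hpt, Finset.sum_sub_distrib, Finset.sum_add_distrib,
      hsum' j, hsum'' j, ← Finset.mul_sum]
    have hrfl : ∑ i ∈ range (L j), Real.sqrt (β' j i * β'' j i) = a j := rfl
    rw [hrfl]; ring
  have hRHS : (fun n => ∑ j ∈ range n, ∑ l ∈ range (L j),
      (Real.sqrt (β' j l) - Real.sqrt (β'' j l))^2)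
      = fun n => ∑ j ∈ range n, (2 - 2 * a j) :=
    funext fun n => Finset.sum_congr rfl (fun j _ => hb j)
  rw [hRHS, key a ha0 ha1,
    ← not_summable_iff_tendsto_nat_atTop_of_nonneg (fun j => by linarith [ha1 j])]
  constructor
  · intro h hs
    exact h ((summable_mul_left_iff (two_ne_zero)).1
      (hs.congr (fun j => by ring)))
  · intro h hs
    exact h ((hs.mul_left 2).congr (fun j => by ring))
end

section
/- Let β : Q → ℝ^∞ be an affine (linear on the parameter simplex) map assigning to each g in a convex set Q ⊆ ℝ^K probability arrays β_{jl}(g) ∈ [0,1]. If g', g'', ḡ', ḡ'' ∈ Q with the segment [g',g''] contained in the segment [ḡ',ḡ''], and ∑_j ∑_l (√(β_{jl}(g')) - √(β_{jl}(g'')))² = ∞, then ∑_j ∑_l (√(β_{jl}(ḡ')) - √(β_{jl}(ḡ'')))² = ∞. -/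
open Filter Finset

lemma key_sqrt_ineq (a b x y : ℝ) (ha : 0 ≤ a) (hb : 0 ≤ b)
    (hx : x ∈ Set.uIcc a b) (hy : y ∈ Set.uIcc a b) :
    (Real.sqrt x - Real.sqrt y)^2 ≤ (Real.sqrt a - Real.sqrt b)^2 := by
  rcases le_total a b with hab | hab
  · rw [Set.uIcc_of_le hab] at hx hy
    have h1 := Real.sqrt_le_sqrt hx.1
    have h2 := Real.sqrt_le_sqrt hx.2
    have h3 := Real.sqrt_le_sqrt hy.1
    have h4 := Real.sqrt_le_sqrt hy.2
    nlinarith [Real.sqrt_nonneg x, Real.sqrt_nonneg y]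
  · rw [Set.uIcc_of_ge hab] at hx hy
    have h1 := Real.sqrt_le_sqrt hx.1
    have h2 := Real.sqrt_le_sqrt hx.2
    have h3 := Real.sqrt_le_sqrt hy.1
    have h4 := Real.sqrt_le_sqrt hy.2
    nlinarith [Real.sqrt_nonneg x, Real.sqrt_nonneg y]

theorem stmt_6 (K : ℕ) (Q : Set (Fin K → ℝ)) (hQ : Convex ℝ Q)
    (L : ℕ → ℕ) (β : ℕ → ℕ → ((Fin K → ℝ) →ᵃ[ℝ] ℝ))
    (hrange : ∀ j l g, l < L j → g ∈ Q → β j l g ∈ Set.Icc (0:ℝ) 1)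
    (g' g'' gbar' gbar'' : Fin K → ℝ)
    (hg' : g' ∈ Q) (hg'' : g'' ∈ Q) (hgbar' : gbar' ∈ Q) (hgbar'' : gbar'' ∈ Q)
    (hseg : segment ℝ g' g'' ⊆ segment ℝ gbar' gbar'')
    (hdiv : Tendsto (fun n => ∑ j ∈ range n, ∑ l ∈ range (L j),
        (Real.sqrt (β j l g') - Real.sqrt (β j l g''))^2) atTop atTop) :
    Tendsto (fun n => ∑ j ∈ range n, ∑ l ∈ range (L j),
        (Real.sqrt (β j l gbar') - Real.sqrt (β j l gbar''))^2) atTop atTop := by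
  apply tendsto_atTop_mono _ hdiv
  intro n
  apply Finset.sum_le_sum
  intro j _
  apply Finset.sum_le_sum
  intro l hl
  have hl' : l < L j := Finset.mem_range.mp hl
  have ha := (hrange j l gbar' hl' hgbar').1
  have hb := (hrange j l gbar'' hl' hgbar'').1
  have hx : β j l g' ∈ Set.uIcc (β j l gbar') (β j l gbar'') := by
    rw [← segment_eq_uIcc, ← image_segment ℝ (β j l) gbar' gbar'']
    exact Set.mem_image_of_mem _ (hseg (left_mem_segment ℝ g' g''))
  have hy : β j l g'' ∈ Set.uIcc (β j l gbar') (β j l gbar'') := by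
    rw [← segment_eq_uIcc, ← image_segment ℝ (β j l) gbar' gbar'']
    exact Set.mem_image_of_mem _ (hseg (right_mem_segment ℝ g' g''))
  exact key_sqrt_ineq _ _ _ _ ha hb hx hy
end

section
/- Let β_{jl}(g) depend affinely on g ∈ Q with ∑_l β_{jl}(g) = 1 for each j. If H⁺(g',g'') := ∑_j ∑_l (√(β_{jl}(g')) - √(β_{jl}(g'')))² = ∞, then H⁺((g'+g'')/2, g'') = ∞ and H⁺(g', (g'+g'')/2) = ∞. -/
open Filter Finset

lemma midpoint_real_eq (a b : ℝ) : midpoint ℝ a b = (a + b) / 2 := by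
  rw [midpoint_eq_smul_add, smul_eq_mul, invOf_eq_inv]
  ring

lemma sqrt_midpoint_key (a b : ℝ) (ha : 0 ≤ a) (hb : 0 ≤ b) :
    (3/2 - Real.sqrt 2) * (Real.sqrt a - Real.sqrt b)^2
      ≤ (Real.sqrt ((a+b)/2) - Real.sqrt b)^2 := by
  set x := Real.sqrt a with hx
  set y := Real.sqrt b with hy
  set m := Real.sqrt ((a+b)/2) with hm
  have hx0 : 0 ≤ x := Real.sqrt_nonneg _
  have hy0 : 0 ≤ y := Real.sqrt_nonneg _
  have hm0 : 0 ≤ m := Real.sqrt_nonneg _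
  have hxa : x^2 = a := Real.sq_sqrt ha
  have hyb : y^2 = b := Real.sq_sqrt hb
  have hm2 : m^2 = (x^2 + y^2)/2 := by rw [hxa, hyb]; exact Real.sq_sqrt (by linarith)
  have hs : (Real.sqrt 2)^2 = 2 := Real.sq_sqrt (by norm_num)
  have hs1 : 1 ≤ Real.sqrt 2 := by nlinarith [Real.sqrt_nonneg 2]
  have hs2 : Real.sqrt 2 ≤ 3/2 := by nlinarith [Real.sqrt_nonneg 2]
  set s := Real.sqrt 2
  have hD : ((s-1)*x^2 + s*y^2 + (3-2*s)*x*y)^2 - (2*m*y)^2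
      = x*(x-y)^2*((3-2*s)*x+(6*s-8)*y) := by
    have h4 : (2*m*y)^2 = 2*y^2*(x^2+y^2) := by rw [mul_pow, mul_pow]; rw [hm2]; ring
    rw [h4]; linear_combination (x-y)^4 * hs
  have h3 : 2*m*y ≤ (s-1)*x^2 + s*y^2 + (3-2*s)*x*y := by
    have hl : 0 ≤ (s-1)*x^2 + s*y^2 + (3-2*s)*x*y := by nlinarith [mul_nonneg hx0 hy0]
    have hr : 0 ≤ x*(x-y)^2*((3-2*s)*x+(6*s-8)*y) := by
      apply mul_nonneg (mul_nonneg hx0 (sq_nonneg _)); nlinarith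
    nlinarith [mul_nonneg hm0 hy0]
  nlinarith [hm2]

theorem stmt_8 (K : ℕ) (Q : Set (Fin K → ℝ)) (hQ : Convex ℝ Q)
    (L : ℕ → ℕ) (β : ℕ → ℕ → ((Fin K → ℝ) →ᵃ[ℝ] ℝ))
    (hrange : ∀ j l g, l < L j → g ∈ Q → β j l g ∈ Set.Icc (0:ℝ) 1)
    (hsum : ∀ j g, g ∈ Q → ∑ l ∈ range (L j), β j l g = 1)
    (g' g'' : Fin K → ℝ) (hg' : g' ∈ Q) (hg'' : g'' ∈ Q)
    (hdiv : Tendsto (fun n => ∑ j ∈ range n, ∑ l ∈ range (L j),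
        (Real.sqrt (β j l g') - Real.sqrt (β j l g''))^2) atTop atTop) :
    Tendsto (fun n => ∑ j ∈ range n, ∑ l ∈ range (L j),
        (Real.sqrt (β j l (midpoint ℝ g' g'')) - Real.sqrt (β j l g''))^2)
      atTop atTop ∧
    Tendsto (fun n => ∑ j ∈ range n, ∑ l ∈ range (L j),
        (Real.sqrt (β j l g') - Real.sqrt (β j l (midpoint ℝ g' g'')))^2)
      atTop atTop := by
  set c : ℝ := 3/2 - Real.sqrt 2 with hc
  have hcpos : 0 < c := by
    have : Real.sqrt 2 < 3/2 := by
      nlinarith [Real.sq_sqrt (by norm_num : (2:ℝ) ≥ 0) , Real.sqrt_nonneg 2]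
    simp [hc]; linarith
  have hmid : ∀ j l, β j l (midpoint ℝ g' g'')
      = (β j l g' + β j l g'') / 2 := by
    intro j l
    rw [AffineMap.map_midpoint, midpoint_real_eq]
  -- pointwise bounds
  have hpt1 : ∀ j l, l < L j →
      c * (Real.sqrt (β j l g') - Real.sqrt (β j l g''))^2
        ≤ (Real.sqrt (β j l (midpoint ℝ g' g'')) - Real.sqrt (β j l g''))^2 := by
    intro j l hl
    rw [hmid j l]
    exact sqrt_midpoint_key _ _ (hrange j l g' hl hg').1 (hrange j l g'' hl hg'').1
  have hpt2 : ∀ j l, l < L j →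
      c * (Real.sqrt (β j l g') - Real.sqrt (β j l g''))^2
        ≤ (Real.sqrt (β j l g') - Real.sqrt (β j l (midpoint ℝ g' g'')))^2 := by
    intro j l hl
    rw [hmid j l]
    have := sqrt_midpoint_key (β j l g'') (β j l g')
      (hrange j l g'' hl hg'').1 (hrange j l g' hl hg').1
    rw [add_comm (β j l g'') (β j l g')] at this
    nlinarith [this]
  have hdiv' : Tendsto (fun n => c * ∑ j ∈ range n, ∑ l ∈ range (L j),
      (Real.sqrt (β j l g') - Real.sqrt (β j l g''))^2) atTop atTop :=
    hdiv.const_mul_atTop hcpos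
  constructor
  · refine tendsto_atTop_mono (fun n => ?_) hdiv'
    rw [mul_sum]
    refine sum_le_sum fun j _ => ?_
    rw [mul_sum]
    exact sum_le_sum fun l hl => hpt1 j l (mem_range.mp hl)
  · refine tendsto_atTop_mono (fun n => ?_) hdiv'
    rw [mul_sum]
    refine sum_le_sum fun j _ => ?_
    rw [mul_sum]
    exact sum_le_sum fun l hl => hpt2 j l (mem_range.mp hl)
end

section
/- Consider binary random variables X_j with P_g(X_j = 1) = 1/2 + g/(2√j) for g ∈ [-1,1]. Then for all g ≠ g' in [-1,1], the series ∑_j [(√(P_g(X_j=1)) - √(P_{g'}(X_j=1)))² + (√(P_g(X_j=0)) - √(P_{g'}(X_j=0)))²] diverges to infinity, and consequently the product measures P_g and P_{g'} on {0,1}^ℕ are mutually singular. -/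
open MeasureTheory Finset Filter ProbabilityTheory

lemma key2 {a b : ℝ} (ha : 0 ≤ a) (ha1 : a ≤ 1) (hb : 0 ≤ b) (hb1 : b ≤ 1) :
    (a - b)^2 ≤ 4 * (Real.sqrt a - Real.sqrt b)^2 := by
  have h1 := Real.sq_sqrt ha
  have h2 := Real.sq_sqrt hb
  have h3 : Real.sqrt a ≤ 1 := Real.sqrt_le_one.mpr ha1
  have h4 : Real.sqrt b ≤ 1 := Real.sqrt_le_one.mpr hb1
  have h5 := Real.sqrt_nonneg a
  have h6 := Real.sqrt_nonneg b
  nlinarith [sq_nonneg (Real.sqrt a - Real.sqrt b), sq_nonneg (Real.sqrt a + Real.sqrt b),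
    sq_nonneg (Real.sqrt a * Real.sqrt b)]

lemma gaplem (x y : ℝ) (j : ℕ) :
    (Real.sqrt (j + 1))⁻¹ * (1/2 + x/(2*Real.sqrt (j + 1)))
      - (Real.sqrt (j + 1))⁻¹ * (1/2 + y/(2*Real.sqrt (j + 1)))
    = ((x - y)/2) * ((j : ℝ) + 1)⁻¹ := by
  have hs : Real.sqrt ((j:ℝ)+1) ^ 2 = (j:ℝ)+1 := Real.sq_sqrt (by positivity)
  have hs0 : Real.sqrt ((j:ℝ)+1) ≠ 0 := by positivity
  rw [← mul_sub]
  have h1 : (1/2 + x/(2*Real.sqrt ((j:ℝ)+1))) - (1/2 + y/(2*Real.sqrt ((j:ℝ)+1)))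
      = (x-y)/(2*Real.sqrt ((j:ℝ)+1)) := by ring
  rw [h1]
  have h2 : (Real.sqrt ((j:ℝ)+1))⁻¹ * ((x-y)/(2*Real.sqrt ((j:ℝ)+1)))
      = (x-y)/2 * (Real.sqrt ((j:ℝ)+1) ^ 2)⁻¹ := by
    field_simp
  rw [h2, hs]

open MeasureTheory Finset Filter ProbabilityTheory

noncomputable def XX (j : ℕ) (a : ℕ → Fin 2) : ℝ := if a j = 1 then 1 else 0
noncomputable def TT (n : ℕ) (a : ℕ → Fin 2) : ℝ :=
  ∑ j ∈ range n, (Real.sqrt (j + 1))⁻¹ * XX j a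

lemma meas_XX (j : ℕ) : Measurable (XX j) :=
  (measurable_from_top (f := fun x : Fin 2 => if x = 1 then (1:ℝ) else 0)).comp
    (measurable_pi_apply j)

lemma meas_TT (n : ℕ) : Measurable (TT n) :=
  Finset.measurable_sum _ fun j _ => (meas_XX j).const_mul _

lemma memlp_XX {P0 : Measure (ℕ → Fin 2)} [IsFiniteMeasure P0] (j : ℕ) :
    MemLp (XX j) 2 P0 := by
  refine (memLp_top_of_bound (meas_XX j).aestronglyMeasurable 1 ?_).mono_exponent le_top
  filter_upwards with a
  unfold XX; split <;> simp

lemma XX_indicator (j : ℕ) :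
    XX j = Set.indicator ((fun a : ℕ → Fin 2 => a j) ⁻¹' {1}) (fun _ => (1:ℝ)) := by
  funext a
  by_cases h : a j = 1 <;> simp [XX, Set.indicator_apply, Set.mem_preimage, Set.mem_singleton_iff, h]

lemma sq_XX (j : ℕ) : (XX j) ^ 2 = XX j := by
  funext a; simp only [Pi.pow_apply]; unfold XX; by_cases h : a j = 1 <;> simp [h]

open scoped Classical in
lemma key_s19 {P0 : Measure (ℕ → Fin 2)} (w : ℕ → Fin 2 → ℝ) (hw : ∀ j x, 0 ≤ w j x)
    (hcyl : ∀ (s : Finset ℕ) (l : ℕ → Fin 2),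
      P0 {a | ∀ j ∈ s, a j = l j} = ENNReal.ofReal (∏ j ∈ s, w j (l j)))
    (S : Finset ℕ) (s : ℕ → Set (Fin 2)) :
    P0 {a | ∀ i ∈ S, a i ∈ s i}
      = ENNReal.ofReal (∏ i ∈ S, ∑ x ∈ (s i).toFinset, w i x) := by
  classical
  set ext : ({x // x ∈ S} → Fin 2) → ℕ → Fin 2 :=
    fun q j => if h : j ∈ S then q ⟨j, h⟩ else 0 with hext
  set F : Finset ({x // x ∈ S} → Fin 2) :=
    Fintype.piFinset (fun i => (s i.1).toFinset) with hF
  have hset : {a : ℕ → Fin 2 | ∀ i ∈ S, a i ∈ s i}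
      = ⋃ q ∈ F, {a | ∀ j ∈ S, a j = ext q j} := by
    ext a
    simp only [Set.mem_setOf_eq, Set.mem_iUnion, exists_prop]
    constructor
    · intro h
      refine ⟨fun i => a i.1, ?_, ?_⟩
      · rw [hF, Fintype.mem_piFinset]
        intro i; rw [Set.mem_toFinset]; exact h i.1 i.2
      · intro j hj; simp [hext, hj]
    · rintro ⟨q, hqF, hq⟩ i hi
      rw [hq i hi]
      have := (Fintype.mem_piFinset.1 hqF) ⟨i, hi⟩
      rw [Set.mem_toFinset] at this
      simpa [hext, hi] using this
  have hmeas : ∀ q : {x // x ∈ S} → Fin 2,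
      MeasurableSet {a : ℕ → Fin 2 | ∀ j ∈ S, a j = ext q j} := by
    intro q
    have : {a : ℕ → Fin 2 | ∀ j ∈ S, a j = ext q j}
        = ⋂ j ∈ S, (fun a : ℕ → Fin 2 => a j) ⁻¹' {ext q j} := by
      ext a; simp
    rw [this]
    exact MeasurableSet.biInter S.countable_toSet
      (fun j _ => (measurable_pi_apply j) (measurableSet_singleton _))
  have hdisj : (↑F : Set ({x // x ∈ S} → Fin 2)).Pairwise
      (Function.onFun Disjoint fun q => {a : ℕ → Fin 2 | ∀ j ∈ S, a j = ext q j}) := by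
    intro q _ q' _ hne
    rw [Function.onFun, Set.disjoint_left]
    intro a ha ha'
    obtain ⟨i, hi⟩ := Function.ne_iff.1 hne
    apply hi
    have h1 := ha i.1 i.2
    have h2 := ha' i.1 i.2
    rw [h1] at h2
    simpa [hext] using h2
  rw [hset, measure_biUnion_finset hdisj (fun q _ => hmeas q)]
  have hterm : ∀ q ∈ F, P0 {a : ℕ → Fin 2 | ∀ j ∈ S, a j = ext q j}
      = ENNReal.ofReal (∏ i ∈ S.attach, w i.1 (q i)) := by
    intro q _
    rw [hcyl S (ext q)]
    congr 1
    rw [← Finset.prod_attach S (fun j => w j (ext q j))]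
    exact Finset.prod_congr rfl fun i _ => by simp [hext, i.2]
  rw [Finset.sum_congr rfl hterm, ← ENNReal.ofReal_sum_of_nonneg
    (fun q _ => Finset.prod_nonneg fun i _ => hw _ _)]
  congr 1
  rw [← Finset.prod_attach S (fun i => ∑ x ∈ (s i).toFinset, w i x)]
  rw [← Finset.univ_eq_attach, Finset.prod_univ_sum]


section
variable {P0 : Measure (ℕ → Fin 2)} {pj : ℕ → ℝ}

open scoped Classical

lemma marg (h0 : ∀ j, 0 ≤ pj j) (h1 : ∀ j, pj j ≤ 1)
    (hcyl : ∀ (s : Finset ℕ) (l : ℕ → Fin 2),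
      P0 {a | ∀ j ∈ s, a j = l j}
        = ENNReal.ofReal (∏ j ∈ s, if l j = 1 then pj j else 1 - pj j))
    (j : ℕ) :
    P0 ((fun a : ℕ → Fin 2 => a j) ⁻¹' {1}) = ENNReal.ofReal (pj j) := by
  have hw : ∀ i (x : Fin 2), 0 ≤ if x = 1 then pj i else 1 - pj i := by
    intro i x; split
    · exact h0 i
    · linarith [h1 i]
  have := key_s19 _ hw hcyl {j} (fun _ => {1})
  have hs : {a : ℕ → Fin 2 | ∀ i ∈ ({j} : Finset ℕ), a i ∈ ({1} : Set (Fin 2))}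
      = (fun a : ℕ → Fin 2 => a j) ⁻¹' {1} := by ext a; simp
  rw [hs] at this
  rw [this]
  congr 1
  rw [Finset.prod_singleton]
  simp

lemma EXX (h0 : ∀ j, 0 ≤ pj j) (h1 : ∀ j, pj j ≤ 1)
    (hcyl : ∀ (s : Finset ℕ) (l : ℕ → Fin 2),
      P0 {a | ∀ j ∈ s, a j = l j}
        = ENNReal.ofReal (∏ j ∈ s, if l j = 1 then pj j else 1 - pj j))
    (j : ℕ) :
    ∫ a, XX j a ∂P0 = pj j := by
  rw [show (fun a => XX j a) = XX j from rfl, XX_indicator,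
    integral_indicator_const (1:ℝ) ((measurable_pi_apply j) (measurableSet_singleton 1)),
    measureReal_def, marg h0 h1 hcyl j, ENNReal.toReal_ofReal (h0 j), smul_eq_mul, mul_one]

lemma varXX [IsProbabilityMeasure P0] (h0 : ∀ j, 0 ≤ pj j) (h1 : ∀ j, pj j ≤ 1)
    (hcyl : ∀ (s : Finset ℕ) (l : ℕ → Fin 2),
      P0 {a | ∀ j ∈ s, a j = l j}
        = ENNReal.ofReal (∏ j ∈ s, if l j = 1 then pj j else 1 - pj j))
    (j : ℕ) :
    variance (XX j) P0 ≤ 1/4 := by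
  rw [variance_eq_sub (memlp_XX j), sq_XX]
  have h2 : (fun a => XX j a) = XX j := rfl
  rw [h2, EXX h0 h1 hcyl j]
  nlinarith [sq_nonneg (pj j - 1/2)]

lemma indep [IsProbabilityMeasure P0] (h0 : ∀ j, 0 ≤ pj j) (h1 : ∀ j, pj j ≤ 1)
    (hcyl : ∀ (s : Finset ℕ) (l : ℕ → Fin 2),
      P0 {a | ∀ j ∈ s, a j = l j}
        = ENNReal.ofReal (∏ j ∈ s, if l j = 1 then pj j else 1 - pj j)) :
    iIndepFun (fun j (a : ℕ → Fin 2) => a j) P0 := by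
  have hw : ∀ i (x : Fin 2), 0 ≤ if x = 1 then pj i else 1 - pj i := by
    intro i x; split
    · exact h0 i
    · linarith [h1 i]
  rw [iIndepFun_iff_measure_inter_preimage_eq_mul]
  intro S sets _
  have hI : (⋂ i ∈ S, (fun a : ℕ → Fin 2 => a i) ⁻¹' sets i)
      = {a : ℕ → Fin 2 | ∀ i ∈ S, a i ∈ sets i} := by ext a; simp
  rw [hI, key_s19 _ hw hcyl S sets]
  have hfac : ∀ i ∈ S, P0 ((fun a : ℕ → Fin 2 => a i) ⁻¹' sets i)
      = ENNReal.ofReal (∑ x ∈ (sets i).toFinset, if x = 1 then pj i else 1 - pj i) := by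
    intro i _
    have := key_s19 _ hw hcyl {i} (fun _ => sets i)
    have hs : {a : ℕ → Fin 2 | ∀ k ∈ ({i} : Finset ℕ), a k ∈ sets i}
        = (fun a : ℕ → Fin 2 => a i) ⁻¹' sets i := by ext a; simp
    rw [hs, Finset.prod_singleton] at this
    exact this
  rw [Finset.prod_congr rfl hfac, ← ENNReal.ofReal_prod_of_nonneg]
  intro i _
  exact Finset.sum_nonneg fun x _ => hw i x

end

section
variable {P0 : Measure (ℕ → Fin 2)} {pj : ℕ → ℝ}
open scoped Classical

lemma TT_eq (n : ℕ) : TT n = ∑ j ∈ range n, (Real.sqrt (j + 1))⁻¹ • XX j := by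
  funext a; simp [TT, Finset.sum_apply]

lemma ET [IsProbabilityMeasure P0] (h0 : ∀ j, 0 ≤ pj j) (h1 : ∀ j, pj j ≤ 1)
    (hcyl : ∀ (s : Finset ℕ) (l : ℕ → Fin 2),
      P0 {a | ∀ j ∈ s, a j = l j}
        = ENNReal.ofReal (∏ j ∈ s, if l j = 1 then pj j else 1 - pj j))
    (n : ℕ) :
    ∫ a, TT n a ∂P0 = ∑ j ∈ range n, (Real.sqrt (j + 1))⁻¹ * pj j := by
  simp only [TT]
  rw [integral_finset_sum _ (fun j _ => ((memlp_XX j).integrable one_le_two).const_mul _)]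
  refine Finset.sum_congr rfl fun j _ => ?_
  rw [integral_const_mul, EXX h0 h1 hcyl j]

lemma VarT [IsProbabilityMeasure P0] (h0 : ∀ j, 0 ≤ pj j) (h1 : ∀ j, pj j ≤ 1)
    (hcyl : ∀ (s : Finset ℕ) (l : ℕ → Fin 2),
      P0 {a | ∀ j ∈ s, a j = l j}
        = ENNReal.ofReal (∏ j ∈ s, if l j = 1 then pj j else 1 - pj j))
    (n : ℕ) :
    variance (TT n) P0 ≤ (1/4) * ∑ j ∈ range n, ((j : ℝ) + 1)⁻¹ := by
  rw [TT_eq]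
  have hmem : ∀ j ∈ range n, MemLp ((Real.sqrt (j + 1))⁻¹ • XX j) 2 P0 :=
    fun j _ => (memlp_XX j).const_smul _
  have hpair : Set.Pairwise ↑(range n)
      (fun i j : ℕ => IndepFun ((Real.sqrt (i + 1))⁻¹ • XX i) ((Real.sqrt (j + 1))⁻¹ • XX j) P0) := by
    intro i _ j _ hij
    have hcomp := (indep h0 h1 hcyl).comp
      (g := fun k (x : Fin 2) => (Real.sqrt (k + 1))⁻¹ * (if x = 1 then (1:ℝ) else 0))
      (fun k => measurable_from_top)
    exact hcomp.indepFun hij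
  rw [IndepFun.variance_sum hmem hpair]
  rw [Finset.mul_sum]
  refine Finset.sum_le_sum fun j _ => ?_
  rw [variance_smul]
  have hsq : ((Real.sqrt (j + 1))⁻¹) ^ 2 = ((j : ℝ) + 1)⁻¹ := by
    rw [inv_pow, Real.sq_sqrt (by positivity)]
  rw [hsq]
  have hv := varXX h0 h1 hcyl j
  have hnn : (0:ℝ) ≤ ((j : ℝ) + 1)⁻¹ := by positivity
  calc ((j : ℝ) + 1)⁻¹ * variance (XX j) P0 ≤ ((j : ℝ) + 1)⁻¹ * (1/4) := by
        exact mul_le_mul_of_nonneg_left hv hnn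
    _ = 1/4 * ((j : ℝ) + 1)⁻¹ := by ring
end

lemma memlp_TT {P0 : Measure (ℕ → Fin 2)} [IsFiniteMeasure P0] (n : ℕ) :
    MemLp (TT n) 2 P0 := by
  rw [TT_eq]
  exact memLp_finsetSum' _ fun j _ => (memlp_XX j).const_smul _

lemma arith {δ v Λ : ℝ} (hδ : 0 < δ) (hΛ : 0 < Λ) (hv : v ≤ 1/4 * Λ) :
    v / ((δ/4) * Λ) ^ 2 ≤ 4 / (δ ^ 2 * Λ) := by
  have hc : 0 < ((δ/4) * Λ) ^ 2 := by positivity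
  have h1 : v / ((δ/4)*Λ)^2 ≤ (1/4*Λ) / ((δ/4)*Λ)^2 := by gcongr
  refine h1.trans_eq ?_
  have hδ' : δ ≠ 0 := hδ.ne'
  have hΛ' : Λ ≠ 0 := hΛ.ne'
  field_simp

set_option maxHeartbeats 1000000 in
lemma sing_aux {P0 Q0 : Measure (ℕ → Fin 2)}
    [IsProbabilityMeasure P0] [IsProbabilityMeasure Q0]
    {pj qj : ℕ → ℝ}
    (hp0 : ∀ j, 0 ≤ pj j) (hp1 : ∀ j, pj j ≤ 1)
    (hq0 : ∀ j, 0 ≤ qj j) (hq1 : ∀ j, qj j ≤ 1)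
    (hcylP : ∀ (s : Finset ℕ) (l : ℕ → Fin 2),
      P0 {a | ∀ j ∈ s, a j = l j}
        = ENNReal.ofReal (∏ j ∈ s, if l j = 1 then pj j else 1 - pj j))
    (hcylQ : ∀ (s : Finset ℕ) (l : ℕ → Fin 2),
      Q0 {a | ∀ j ∈ s, a j = l j}
        = ENNReal.ofReal (∏ j ∈ s, if l j = 1 then qj j else 1 - qj j))
    {δ : ℝ} (hδ : 0 < δ)
    (hgap : ∀ j : ℕ, (Real.sqrt (j + 1))⁻¹ * pj j - (Real.sqrt (j + 1))⁻¹ * qj j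
      = (δ/2) * ((j : ℝ) + 1)⁻¹) :
    P0.MutuallySingular Q0 := by
  classical
  set L : ℕ → ℝ := fun n => ∑ j ∈ range n, ((j : ℝ) + 1)⁻¹ with hLdef
  have hL : Tendsto L atTop atTop := by
    have h := Real.tendsto_sum_range_one_div_nat_succ_atTop
    have heq : L = fun n => ∑ i ∈ range n, 1 / ((i : ℝ) + 1) := by
      funext n; exact Finset.sum_congr rfl fun j _ => (one_div _).symm
    rw [heq]; exact h
  have hpick : ∀ k : ℕ, ∃ n : ℕ, 4 * 2 ^ k / δ ^ 2 + 1 ≤ L n :=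
    fun k => (hL.eventually_ge_atTop _).exists
  choose nk hnk using hpick
  set A : ℕ → Set (ℕ → Fin 2) :=
    fun k => {a | (∫ x, TT (nk k) x ∂P0 + ∫ x, TT (nk k) x ∂Q0) / 2 ≤ TT (nk k) a} with hAdef
  have hAmeas : ∀ k, MeasurableSet (A k) :=
    fun k => measurableSet_le measurable_const (meas_TT _)
  have hEgap : ∀ n : ℕ, ∫ x, TT n x ∂P0 - ∫ x, TT n x ∂Q0 = (δ/2) * L n := by
    intro n
    rw [ET hp0 hp1 hcylP n, ET hq0 hq1 hcylQ n, ← Finset.sum_sub_distrib, hLdef,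
      Finset.mul_sum]
    exact Finset.sum_congr rfl fun j _ => hgap j
  have hLpos : ∀ k, 0 < L (nk k) := by
    intro k
    have : (0:ℝ) < 4 * 2 ^ k / δ ^ 2 + 1 := by positivity
    linarith [hnk k]
  have hbound : ∀ k, 4 / (δ ^ 2 * L (nk k)) ≤ (1/2) ^ k := by
    intro k
    have h2 : 4 * 2 ^ k / δ ^ 2 ≤ L (nk k) := by linarith [hnk k]
    have h1 : 4 * 2 ^ k ≤ δ ^ 2 * L (nk k) := by
      calc (4:ℝ) * 2 ^ k = δ ^ 2 * (4 * 2 ^ k / δ ^ 2) := by field_simp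
        _ ≤ δ ^ 2 * L (nk k) := mul_le_mul_of_nonneg_left h2 (by positivity)
    rw [div_le_iff₀ (lt_of_lt_of_le (by positivity) h1)]
    calc (4:ℝ) = (1/2) ^ k * (4 * 2 ^ k) := by
          rw [one_div, inv_pow]; field_simp
      _ ≤ (1/2) ^ k * (δ ^ 2 * L (nk k)) := mul_le_mul_of_nonneg_left h1 (by positivity)
  have hvar : ∀ k (μ : Measure (ℕ → Fin 2)) [IsProbabilityMeasure μ],
      variance (TT (nk k)) μ ≤ 1/4 * L (nk k) → ∀ c : Set (ℕ → Fin 2),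
      c ⊆ {a | (δ/4) * L (nk k) ≤ |TT (nk k) a - ∫ x, TT (nk k) x ∂μ|} →
      μ c ≤ ENNReal.ofReal ((1/2) ^ k) := by
    intro k μ _ hv c hsub
    have hcpos : 0 < (δ/4) * L (nk k) := mul_pos (by positivity) (hLpos k)
    calc μ c ≤ μ {a | (δ/4) * L (nk k) ≤ |TT (nk k) a - ∫ x, TT (nk k) x ∂μ|} :=
          measure_mono hsub
      _ ≤ ENNReal.ofReal (variance (TT (nk k)) μ / ((δ/4) * L (nk k)) ^ 2) :=
          meas_ge_le_variance_div_sq (memlp_TT _) hcpos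
      _ ≤ ENNReal.ofReal ((1/2) ^ k) := by
          apply ENNReal.ofReal_le_ofReal
          exact (arith hδ (hLpos k) hv).trans (hbound k)
  have hchebQ : ∀ k, Q0 (A k) ≤ ENNReal.ofReal ((1/2) ^ k) := by
    intro k
    refine hvar k Q0 (VarT hq0 hq1 hcylQ (nk k)) (A k) ?_
    intro a ha
    have h1 : (∫ x, TT (nk k) x ∂P0 + ∫ x, TT (nk k) x ∂Q0) / 2 ≤ TT (nk k) a := ha
    have h2 := hEgap (nk k)
    have h3 : (δ/4) * L (nk k) ≤ TT (nk k) a - ∫ x, TT (nk k) x ∂Q0 := by linarith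
    exact h3.trans (le_abs_self _)
  have hchebP : ∀ k, P0 ((A k)ᶜ) ≤ ENNReal.ofReal ((1/2) ^ k) := by
    intro k
    refine hvar k P0 (VarT hp0 hp1 hcylP (nk k)) ((A k)ᶜ) ?_
    intro a ha
    rw [Set.mem_compl_iff, hAdef, Set.mem_setOf_eq, not_le] at ha
    have h2 := hEgap (nk k)
    have h3 : (δ/4) * L (nk k) ≤ (∫ x, TT (nk k) x ∂P0) - TT (nk k) a := by linarith
    calc (δ/4) * L (nk k) ≤ (∫ x, TT (nk k) x ∂P0) - TT (nk k) a := h3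
      _ ≤ |TT (nk k) a - ∫ x, TT (nk k) x ∂P0| := by
          rw [abs_sub_comm]; exact le_abs_self _
  have htsum : ∀ (μ : Measure (ℕ → Fin 2)) (B : ℕ → Set (ℕ → Fin 2)),
      (∀ k, μ (B k) ≤ ENNReal.ofReal ((1/2) ^ k)) → μ (limsup B atTop) = 0 := by
    intro μ B hB
    apply measure_limsup_atTop_eq_zero
    refine ne_top_of_le_ne_top ?_ (ENNReal.tsum_le_tsum hB)
    rw [← ENNReal.ofReal_tsum_of_nonneg (fun k => by positivity)
      (summable_geometric_of_lt_one (by norm_num) (by norm_num))]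
    exact ENNReal.ofReal_ne_top
  refine ⟨limsup (fun k => (A k)ᶜ) atTop, ?_, ?_, ?_⟩
  · exact MeasurableSet.measurableSet_limsup fun k => (hAmeas k).compl
  · exact htsum P0 _ hchebP
  · have hcompl : (limsup (fun k => (A k)ᶜ) atTop)ᶜ = liminf A atTop := by
      rw [Filter.limsup_compl]
      simp [Function.comp_def]
    rw [hcompl]
    refine le_antisymm ?_ zero_le
    calc Q0 (liminf A atTop) ≤ Q0 (limsup A atTop) :=
          measure_mono Filter.liminf_le_limsup
      _ = 0 := htsum Q0 A hchebQ


lemma pbnd {g : ℝ} (hg : g ∈ Set.Icc (-1:ℝ) 1) (j : ℕ) :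
    0 ≤ 1/2 + g / (2 * Real.sqrt (j + 1)) ∧ 1/2 + g / (2 * Real.sqrt (j + 1)) ≤ 1 := by
  obtain ⟨hg1, hg2⟩ := hg
  have hj : (1:ℝ) ≤ (j:ℝ) + 1 := by
    have := Nat.cast_nonneg (α := ℝ) j
    linarith
  have hs1 : 1 ≤ Real.sqrt ((j:ℝ) + 1) := by
    calc (1:ℝ) = Real.sqrt 1 := Real.sqrt_one.symm
      _ ≤ _ := Real.sqrt_le_sqrt hj
  have hs0 : 0 < Real.sqrt ((j:ℝ) + 1) := lt_of_lt_of_le one_pos hs1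
  constructor
  · have h : -(1/2) ≤ g / (2 * Real.sqrt ((j:ℝ) + 1)) := by
      rw [le_div_iff₀ (by positivity)]
      nlinarith
    linarith
  · have h : g / (2 * Real.sqrt ((j:ℝ) + 1)) ≤ 1/2 := by
      rw [div_le_iff₀ (by positivity)]
      nlinarith
    linarith


theorem stmt_19
    (p : ℝ → ℕ → ℝ)
    (hp : ∀ g j, p g j = 1/2 + g / (2 * Real.sqrt (j + 1)))
    (P : ℝ → Measure (ℕ → Fin 2))
    [∀ g, IsProbabilityMeasure (P g)]
    (hcyl : ∀ g ∈ Set.Icc (-1:ℝ) 1, ∀ (s : Finset ℕ) (l : ℕ → Fin 2),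
      P g {a | ∀ j ∈ s, a j = l j}
        = ENNReal.ofReal (∏ j ∈ s, if l j = 1 then p g j else 1 - p g j)) :
    ∀ g ∈ Set.Icc (-1:ℝ) 1, ∀ g' ∈ Set.Icc (-1:ℝ) 1, g ≠ g' →
      Tendsto (fun n => ∑ j ∈ range n,
          ((Real.sqrt (p g j) - Real.sqrt (p g' j))^2
            + (Real.sqrt (1 - p g j) - Real.sqrt (1 - p g' j))^2))
        atTop atTop ∧
      (P g).MutuallySingular (P g') := by
  intro g hg g' hg' hne
  have h0g : ∀ j, 0 ≤ p g j := fun j => by rw [hp]; exact (pbnd hg j).1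
  have h1g : ∀ j, p g j ≤ 1 := fun j => by rw [hp]; exact (pbnd hg j).2
  have h0g' : ∀ j, 0 ≤ p g' j := fun j => by rw [hp]; exact (pbnd hg' j).1
  have h1g' : ∀ j, p g' j ≤ 1 := fun j => by rw [hp]; exact (pbnd hg' j).2
  have hcg := hcyl g hg
  have hcg' := hcyl g' hg'
  have hL : Tendsto (fun n => ∑ j ∈ range n, ((j:ℝ)+1)⁻¹) atTop atTop := by
    have h := Real.tendsto_sum_range_one_div_nat_succ_atTop
    have heq : (fun n => ∑ j ∈ range n, ((j:ℝ)+1)⁻¹)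
        = fun n => ∑ i ∈ range n, 1/((i:ℝ)+1) := by
      funext n; exact Finset.sum_congr rfl fun j _ => (one_div _).symm
    rw [heq]; exact h
  constructor
  · have hgg : g - g' ≠ 0 := sub_ne_zero.mpr hne
    have hc : (0:ℝ) < (g-g')^2/16 := by positivity
    refine tendsto_atTop_mono ?_ (hL.const_mul_atTop hc)
    intro n
    rw [Finset.mul_sum]
    refine Finset.sum_le_sum fun j _ => ?_
    have hab : p g j - p g' j = (g - g') / (2 * Real.sqrt (j + 1)) := by
      rw [hp, hp]; ring
    have hsq : (p g j - p g' j)^2 = (g - g')^2 / (4 * ((j:ℝ)+1)) := by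
      rw [hab, div_pow, mul_pow, Real.sq_sqrt (by positivity)]
      norm_num
    have h4 := key2 (h0g j) (h1g j) (h0g' j) (h1g' j)
    have hne0 : ((j:ℝ)+1) ≠ 0 := by positivity
    have h5 : (g-g')^2/16 * ((j:ℝ)+1)⁻¹ = (p g j - p g' j)^2/4 := by
      rw [hsq]; field_simp; ring
    have h6 := sq_nonneg (Real.sqrt (1 - p g j) - Real.sqrt (1 - p g' j))
    linarith
  · rcases hne.lt_or_gt with h | h
    · refine (sing_aux h0g' h1g' h0g h1g hcg' hcg (δ := g' - g) (by linarith) ?_).symm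
      intro j
      rw [hp, hp]
      exact gaplem g' g j
    · refine sing_aux h0g h1g h0g' h1g' hcg hcg' (δ := g - g') (by linarith) ?_
      intro j
      rw [hp, hp]
      exact gaplem g g' j
end
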